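/- arXiv:1303.5891 — 9 statements merged into one kernel-verified Lean document; each statement's English description precedes it below -/
import Mathlib

section
/- Let 𝓜 = (M_i)_{i∈ι} be a finite indexed family of machines over T and let f be a natural number. Then d_min(𝓜) > f if and only if 𝓜 can correct up to f crash faults, i.e., for every subset S ⊆ ι with |ι \ S| ≤ f and every pair of distinct states t ≠ t' of T, some machine M_i with i ∈ S separates t and t' (equivalently, the joint map sending each state t to the tuple of its equivalence classes (⟦t⟧_{M_i})_{i∈S} is injective). -/
open scoped Classical

/-- A machine over `T` (a closed partition of `T`): an equivalence relation on `T`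
that is preserved by the transition function `δ`. -/
structure Machine (T : Type*) (E : Type*) (δ : T → E → T) where
  rel : T → T → Prop
  equiv : Equivalence rel
  closed : ∀ x y : T, rel x y → ∀ e : E, rel (δ x e) (δ y e)

/-- The distance `d_𝓜(t,t')`: the number of machines in the family `M` that
separate `t` and `t'`. -/
noncomputable def fdist {T E ι : Type*} {δ : T → E → T} [Fintype ι]
    (M : ι → Machine T E δ) (t t' : T) : ℕ :=
  (Finset.univ.filter fun i => ¬ (M i).rel t t').card

/-- The minimum distance `d_min(𝓜)`: the minimum of `fdist M t t'` over all pairs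
of distinct states `t ≠ t'`. -/
noncomputable def dmin {T E ι : Type*} {δ : T → E → T} [Fintype ι]
    (M : ι → Machine T E δ) : ℕ :=
  sInf {d : ℕ | ∃ t t' : T, t ≠ t' ∧ d = fdist M t t'}

/-- `d_min(𝓜) > f` iff `𝓜` can correct up to `f` crash faults:
for every surviving subset `S` with at most `f` machines missing, every pair of
distinct states of `T` is separated by some surviving machine. -/
theorem crash_correction_iff {T E ι : Type*} [Fintype T] [Nontrivial T] [Fintype ι]
    {δ : T → E → T} (M : ι → Machine T E δ) (f : ℕ) :
    dmin M > f ↔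
      ∀ S : Finset ι, (Finset.univ \ S).card ≤ f →
        ∀ t t' : T, t ≠ t' → ∃ i ∈ S, ¬ (M i).rel t t' := by
  have hne : {d : ℕ | ∃ t t' : T, t ≠ t' ∧ d = fdist M t t'}.Nonempty := by
    obtain ⟨t, t', h⟩ := exists_pair_ne T
    exact ⟨fdist M t t', t, t', h, rfl⟩
  constructor
  · intro h S hS t t' htt
    have hmem : dmin M ≤ fdist M t t' := Nat.sInf_le ⟨t, t', htt, rfl⟩
    have hf : f < fdist M t t' := lt_of_lt_of_le h hmem
    set A := Finset.univ.filter fun i => ¬ (M i).rel t t' with hA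
    have hAc : A.card = fdist M t t' := rfl
    have : ¬ (A ⊆ Finset.univ \ S) := by
      intro hsub
      have := Finset.card_le_card hsub
      omega
    obtain ⟨i, hiA, hiNS⟩ := Finset.not_subset.mp this
    simp only [Finset.mem_sdiff, Finset.mem_univ, true_and, not_not] at hiNS
    refine ⟨i, hiNS, ?_⟩
    simpa [hA] using hiA
  · intro h
    obtain ⟨t, t', htt, hd⟩ := Nat.sInf_mem hne
    rw [show dmin M = fdist M t t' from hd]
    by_contra hle
    push_neg at hle
    set A := Finset.univ.filter fun i => ¬ (M i).rel t t' with hA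
    have hcard : (Finset.univ \ (Finset.univ \ A)).card ≤ f := by
      have hAA : Finset.univ \ (Finset.univ \ A) = A := by simp
      rw [hAA]
      exact hle
    obtain ⟨i, hiS, hirel⟩ := h (Finset.univ \ A) hcard t t' htt
    simp only [Finset.mem_sdiff, Finset.mem_univ, true_and, hA,
      Finset.mem_filter, not_and, not_not] at hiS
    exact hirel hiS
end

section
/- Let 𝓜 = (M_i)_{i∈ι} be a finite indexed family of machines over T and let f be a natural number. Then d_min(𝓜) > 2f if and only if 𝓜 can correct up to f Byzantine faults, in the following sense: for all distinct states t ≠ t' of T there is no report function r : ι → T that is consistent with both t and t' up to f lies, i.e., no r with |{i ∈ ι : ¬(r i ≈_{M_i} t)}| ≤ f and |{i ∈ ι : ¬(r i ≈_{M_i} t')}| ≤ f. -/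
open scoped Classical

/-- `d_min(𝓜) > 2f` iff `𝓜` can correct up to `f` Byzantine faults:
for all distinct states `t ≠ t'` there is no report function consistent with
both `t` and `t'` up to `f` lies. -/
theorem byzantine_correction_iff {T E ι : Type*} [Fintype T] [Nontrivial T] [Fintype ι]
    {δ : T → E → T} (M : ι → Machine T E δ) (f : ℕ) :
    dmin M > 2 * f ↔
      ∀ t t' : T, t ≠ t' →
        ¬ ∃ r : ι → T,
            (Finset.univ.filter fun i => ¬ (M i).rel (r i) t).card ≤ f ∧
            (Finset.univ.filter fun i => ¬ (M i).rel (r i) t').card ≤ f := by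
  constructor
  · intro hd t t' hne ⟨r, h1, h2⟩
    have hmem : fdist M t t' ∈ {d : ℕ | ∃ t t' : T, t ≠ t' ∧ d = fdist M t t'} :=
      ⟨t, t', hne, rfl⟩
    have hle : dmin M ≤ fdist M t t' := Nat.sInf_le hmem
    have hsub : (Finset.univ.filter fun i => ¬ (M i).rel t t') ⊆
        (Finset.univ.filter fun i => ¬ (M i).rel (r i) t) ∪
        (Finset.univ.filter fun i => ¬ (M i).rel (r i) t') := by
      intro i hi
      simp only [Finset.mem_filter, Finset.mem_union, Finset.mem_univ, true_and] at hi ⊢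
      by_contra hc
      push_neg at hc
      exact hi ((M i).equiv.trans ((M i).equiv.symm hc.1) hc.2)
    have := (Finset.card_le_card hsub).trans
      ((Finset.card_union_le _ _).trans (Nat.add_le_add h1 h2))
    unfold fdist at hle
    omega
  · intro h
    by_contra hc
    push_neg at hc
    have hne : {d : ℕ | ∃ t t' : T, t ≠ t' ∧ d = fdist M t t'}.Nonempty := by
      obtain ⟨a, b, hab⟩ := exists_pair_ne T
      exact ⟨fdist M a b, a, b, hab, rfl⟩
    obtain ⟨t, t', htt, heq⟩ := Nat.sInf_mem hne
    set S := (Finset.univ.filter fun i => ¬ (M i).rel t t') with hS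
    have hScard : S.card ≤ 2 * f := by
      have : dmin M = S.card := heq
      omega
    obtain ⟨A, hAS, hAcard⟩ := Finset.exists_subset_card_eq
      (show min f S.card ≤ S.card from min_le_right _ _)
    -- A ⊆ S with card = min f S.card
    refine h t t' htt ⟨fun i => if i ∈ A then t' else t, ?_, ?_⟩
    · -- liars wrt t ⊆ A
      have hsub : (Finset.univ.filter fun i => ¬ (M i).rel ((if i ∈ A then t' else t)) t) ⊆ A := by
        intro i hi
        simp only [Finset.mem_filter, Finset.mem_univ, true_and] at hi
        by_contra hiA
        simp [hiA] at hi
        exact hi ((M i).equiv.refl t)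
      calc _ ≤ A.card := Finset.card_le_card hsub
        _ ≤ f := by omega
    · have hsub : (Finset.univ.filter fun i => ¬ (M i).rel ((if i ∈ A then t' else t)) t') ⊆ S \ A := by
        intro i hi
        simp only [Finset.mem_filter, Finset.mem_univ, true_and] at hi
        by_cases hiA : i ∈ A
        · simp [hiA] at hi
          exact absurd ((M i).equiv.refl t') hi
        · simp [hiA] at hi
          refine Finset.mem_sdiff.mpr ⟨?_, hiA⟩
          simp [hS, hi]
      have hcard : (S \ A).card = S.card - A.card := Finset.card_sdiff_of_subset hAS
      calc _ ≤ (S \ A).card := Finset.card_le_card hsub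
        _ ≤ f := by omega
end

section
/- (Subset of a Fusion) Let 𝓟 = (P_i)_{i∈I} and 𝓕 = (F_j)_{j∈J} be finite indexed families of machines over T, and let f and t be natural numbers with t ≤ min(f, |J|). If d_min of the combined family 𝓟 ⊕ 𝓕 (indexed by the disjoint sum I ⊕ J) satisfies d_min(𝓟 ⊕ 𝓕) > f, then for every subset J' ⊆ J with |J \ J'| = t, the combined family of 𝓟 with the subfamily (F_j)_{j∈J'} satisfies d_min(𝓟 ⊕ 𝓕|_{J'}) > f − t; that is, any subfamily of an (f, m)-fusion obtained by removing t machines is an (f−t, m−t)-fusion. -/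
open scoped Classical

/-- `fdist` of a combined family splits as a sum. -/
lemma fdist_sum {T E I J : Type*} {δ : T → E → T} [Fintype I] [Fintype J]
    (P : I → Machine T E δ) (F : J → Machine T E δ) (x y : T) :
    fdist (Sum.elim P F) x y = fdist P x y + fdist F x y := by
  unfold fdist
  rw [← Fintype.card_subtype, ← Fintype.card_subtype, ← Fintype.card_subtype]
  exact (Fintype.card_congr Equiv.subtypeSum).trans Fintype.card_sum

/-- `fdist` of a subfamily as a filtered card. -/
lemma fdist_subtype {T E J : Type*} {δ : T → E → T} [Fintype J]
    (F : J → Machine T E δ) (J' : Finset J) (x y : T) :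
    fdist (fun j : J' => F j.1) x y = (J'.filter fun j => ¬ (F j).rel x y).card := by
  unfold fdist
  rw [← Fintype.card_subtype,
    Fintype.card_congr (Equiv.subtypeSubtypeEquivSubtypeInter (· ∈ J') fun j => ¬ (F j).rel x y),
    Fintype.card_subtype]
  congr 1
  ext j
  simp

lemma card_filter_subset_ge {J : Type*} [Fintype J] (J' : Finset J) (p : J → Prop)
    [DecidablePred p] :
    (Finset.univ.filter p).card ≤ (J'.filter p).card + (Finset.univ \ J').card := by
  have h : (Finset.univ.filter p) ⊆ (J'.filter p) ∪ (Finset.univ \ J') := by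
    intro j hj
    simp only [Finset.mem_filter, Finset.mem_univ, true_and] at hj
    by_cases hJ : j ∈ J'
    · exact Finset.mem_union_left _ (Finset.mem_filter.mpr ⟨hJ, hj⟩)
    · exact Finset.mem_union_right _ (by simp [hJ])
  exact (Finset.card_le_card h).trans (Finset.card_union_le _ _)

/-- Subset of a Fusion: removing `t ≤ min(f, |J|)` machines from an
`(f, m)`-fusion leaves an `(f-t, m-t)`-fusion. -/
theorem subset_of_fusion {T E I J : Type*} [Fintype T] [Nontrivial T] [Fintype I] [Fintype J]
    {δ : T → E → T} (P : I → Machine T E δ) (F : J → Machine T E δ)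
    (f t : ℕ) (ht : t ≤ min f (Fintype.card J))
    (hfus : dmin (Sum.elim P F) > f) :
    ∀ J' : Finset J, (Finset.univ \ J').card = t →
      dmin (Sum.elim P (fun j : J' => F j.1)) > f - t := by
  intro J' hJ'
  obtain ⟨a, b, hab⟩ := exists_pair_ne T
  have hne : {d : ℕ | ∃ x y : T, x ≠ y ∧ d = fdist (Sum.elim P (fun j : J' => F j.1)) x y}.Nonempty :=
    ⟨_, a, b, hab, rfl⟩
  obtain ⟨x, y, hxy, hd⟩ := Nat.sInf_mem hne
  rw [dmin, hd]
  have hfull : f < fdist (Sum.elim P F) x y :=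
    lt_of_lt_of_le hfus (Nat.sInf_le ⟨x, y, hxy, rfl⟩)
  have h1 := fdist_sum P F x y
  have h2 := fdist_sum P (fun j : J' => F j.1) x y
  have h3 := fdist_subtype F J' x y
  have h4 := card_filter_subset_ge J' (fun j => ¬ (F j).rel x y)
  have h5 : (Finset.univ.filter fun j : J => ¬ (F j).rel x y).card = fdist F x y := rfl
  rw [hJ'] at h4
  omega
end

section
/- (Existence of Fusions) Let 𝓟 be a finite indexed family of machines over T and let f, m be natural numbers. There exists a family 𝓕 of m machines over T with d_min(𝓟 ⊕ 𝓕) > f (i.e., an (f, m)-fusion of 𝓟 exists) if and only if m + d_min(𝓟) > f. -/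
open scoped Classical

/-!
Adding `m` machines raises every distance by at most `m`, so `d_min(𝓟 ⊕ 𝓕) ≤ d_min(𝓟) + m`.
Conversely, `m` copies of the RCP (the equality machine) separate every pair of distinct
states, so they raise every distance, hence `d_min`, by exactly `m`.
-/

def Machine.rcp {T E : Type*} (δ : T → E → T) : Machine T E δ :=
  ⟨Eq, eq_equivalence, fun _ _ h _ => h ▸ rfl⟩

section Distance

variable {T E ι J : Type*} {δ : T → E → T} [Fintype ι] [Fintype J]

theorem fdist_sum_elim (P : ι → Machine T E δ) (F : J → Machine T E δ) (t t' : T) :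
    fdist (Sum.elim P F) t t' = fdist P t t' + fdist F t t' := by
  simp only [fdist, Finset.card_filter, Fintype.sum_sum_type, Sum.elim_inl, Sum.elim_inr]
  congr

theorem fdist_le_card (M : ι → Machine T E δ) (t t' : T) : fdist M t t' ≤ Fintype.card ι :=
  Finset.card_filter_le _ _

theorem fdist_const_rcp {t t' : T} (h : t ≠ t') :
    fdist (fun _ : ι => Machine.rcp δ) t t' = Fintype.card ι := by
  simp [fdist, Machine.rcp, h]

theorem dmin_le_fdist (M : ι → Machine T E δ) {t t' : T} (h : t ≠ t') :
    dmin M ≤ fdist M t t' :=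
  Nat.sInf_le ⟨t, t', h, rfl⟩

variable [Nontrivial T]

theorem exists_fdist_eq_dmin (M : ι → Machine T E δ) :
    ∃ t t', t ≠ t' ∧ fdist M t t' = dmin M := by
  obtain ⟨t, t', h⟩ := exists_pair_ne T
  obtain ⟨s, s', hs, hd⟩ :=
    Nat.sInf_mem (s := {d | ∃ t t' : T, t ≠ t' ∧ d = fdist M t t'}) ⟨_, t, t', h, rfl⟩
  exact ⟨s, s', hs, hd.symm⟩

theorem le_dmin_iff (M : ι → Machine T E δ) {n : ℕ} :
    n ≤ dmin M ↔ ∀ t t', t ≠ t' → n ≤ fdist M t t' := by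
  refine ⟨fun hn t t' h => hn.trans (dmin_le_fdist M h), fun hn => ?_⟩
  obtain ⟨t, t', h, hd⟩ := exists_fdist_eq_dmin M
  exact hd ▸ hn t t' h

theorem dmin_sum_elim_le (P : ι → Machine T E δ) (F : J → Machine T E δ) :
    dmin (Sum.elim P F) ≤ dmin P + Fintype.card J := by
  obtain ⟨t, t', h, hd⟩ := exists_fdist_eq_dmin P
  calc dmin (Sum.elim P F) ≤ fdist (Sum.elim P F) t t' := dmin_le_fdist _ h
    _ = dmin P + fdist F t t' := by rw [fdist_sum_elim, hd]
    _ ≤ dmin P + Fintype.card J := Nat.add_le_add_left (fdist_le_card F t t') _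

theorem dmin_sum_elim_const_rcp (P : ι → Machine T E δ) :
    dmin (Sum.elim P fun _ : J => Machine.rcp δ) = dmin P + Fintype.card J := by
  refine (dmin_sum_elim_le P _).antisymm ((le_dmin_iff _).2 fun t t' h => ?_)
  rw [fdist_sum_elim, fdist_const_rcp h]
  exact Nat.add_le_add_right (dmin_le_fdist P h) _

end Distance

theorem fusion_exists_iff_general {T E I : Type*} [Nontrivial T] [Fintype I]
    {δ : T → E → T} (P : I → Machine T E δ) (f m : ℕ) :
    (∃ F : Fin m → Machine T E δ, dmin (Sum.elim P F) > f) ↔ m + dmin P > f := by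
  constructor
  · rintro ⟨F, hF⟩
    have h := dmin_sum_elim_le P F
    rw [Fintype.card_fin] at h
    omega
  · intro h
    refine ⟨fun _ => Machine.rcp δ, ?_⟩
    rw [dmin_sum_elim_const_rcp, Fintype.card_fin]
    omega

/-- Existence of Fusions: an `(f, m)`-fusion of `𝓟` exists iff
`m + d_min(𝓟) > f`. -/
theorem fusion_exists_iff {T E I : Type*} [Fintype T] [Nontrivial T] [Fintype I]
    {δ : T → E → T} (P : I → Machine T E δ) (f m : ℕ) :
    (∃ F : Fin m → Machine T E δ, dmin (Sum.elim P F) > f) ↔ m + dmin P > f :=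
  fusion_exists_iff_general P f m
end

section
/- (Commutativity) Let l and l' be lists of events that are permutations of one another, and suppose that any two events occurring at distinct positions of l are either equal or have disjoint supports. Then for every state x of the RCP, Δ*(x, l) = Δ*(x, l'). In particular, for any two events a and b with supp(a) ∩ supp(b) = ∅ and any state x, Δ(Δ(x, a), b) = Δ(Δ(x, b), a); thus the state of the RCP (and hence of any fused backup) after acting on a sequence of events is independent of the order in which the events are received, as long as the events belong to distinct sets of primaries. -/
/-- An event `e` is relevant to primary `i` if it moves some state; the support of
`e` is the set of primaries it is relevant to. -/
def supp {I E : Type*} {X : I → Type*} (δ : ∀ i, X i → E → X i) (e : E) : Set I :=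
  {i | ∃ x : X i, δ i x e ≠ x}

/-- The transition function `Δ` of the reachable cross product. -/
def step {I E : Type*} {X : I → Type*} (δ : ∀ i, X i → E → X i)
    (x : ∀ i, X i) (e : E) : ∀ i, X i :=
  fun i => δ i (x i) e

/-- `Δ*`: apply a list of events in order starting from `x`. -/
def run {I E : Type*} {X : I → Type*} (δ : ∀ i, X i → E → X i)
    (x : ∀ i, X i) (l : List E) : ∀ i, X i :=
  l.foldl (step δ) x

lemma not_supp_fix {I E : Type*} {X : I → Type*} (δ : ∀ i, X i → E → X i)
    {e : E} {i : I} (h : i ∉ supp δ e) (y : X i) : δ i y e = y := by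
  by_contra hc
  exact h ⟨y, hc⟩

lemma steps_comm {I E : Type*} {X : I → Type*} (δ : ∀ i, X i → E → X i)
    {a b : E} (h : supp δ a ∩ supp δ b = ∅) (x : ∀ i, X i) :
    step δ (step δ x a) b = step δ (step δ x b) a := by
  funext i
  by_cases ha : i ∈ supp δ a
  · have hb : i ∉ supp δ b := fun hb => Set.eq_empty_iff_forall_notMem.mp h i ⟨ha, hb⟩
    simp [step, not_supp_fix δ hb]
  · simp [step, not_supp_fix δ ha]

/-- Commutativity: if `l'` is a permutation of `l` and any two events at
distinct positions of `l` are equal or have disjoint supports, then `Δ*(x, l) = Δ*(x, l')`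
for every state `x` of the RCP; in particular, events with disjoint supports commute. -/
theorem rcp_commutativity {I E : Type*} [Fintype I] {X : I → Type*}
    (δ : ∀ i, X i → E → X i) (l l' : List E) (hperm : l.Perm l')
    (hdisj : ∀ p q : Fin l.length, p ≠ q →
      l.get p = l.get q ∨ supp δ (l.get p) ∩ supp δ (l.get q) = ∅) :
    (∀ x : ∀ i, X i, run δ x l = run δ x l') ∧
    (∀ a b : E, supp δ a ∩ supp δ b = ∅ →
      ∀ x : ∀ i, X i, step δ (step δ x a) b = step δ (step δ x b) a) := by
  constructor
  · intro x
    apply hperm.foldl_eq'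
    intro a ha b hb z
    obtain ⟨p, hp⟩ := List.get_of_mem ha
    obtain ⟨q, hq⟩ := List.get_of_mem hb
    by_cases hpq : p = q
    · subst hpq
      rw [← hp, ← hq]
    · rcases hdisj p q hpq with h | h
      · rw [← hp, ← hq, h]
      · rw [← hp, ← hq]
        exact steps_comm δ h z
  · exact fun a b h x => steps_comm δ h x
end

section
/- Let 𝓟 be a finite indexed family of machines over T with d_min(𝓟) = 1, and let 𝓕 = (F_j)_{j∈J} be a family of f = |J| machines over T such that d_min(𝓟 ⊕ 𝓕) > f (i.e., 𝓕 is an (f, f)-fusion of 𝓟). Then every machine F_j separates every pair of distinct states t ≠ t' with d_𝓟(t,t') = 1; that is, every fusion machine covers every weakest edge of the fault graph of the primaries. -/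
open scoped Classical

private lemma filter_card_sum {α β : Type*} [Fintype α] [Fintype β] (p : α ⊕ β → Prop) :
    (Finset.univ.filter p).card =
    (Finset.univ.filter fun a => p (Sum.inl a)).card +
    (Finset.univ.filter fun b => p (Sum.inr b)).card := by
  rw [← Fintype.card_subtype, ← Fintype.card_subtype, ← Fintype.card_subtype,
    ← Fintype.card_sum, Fintype.card_congr Equiv.subtypeSum]

/-- every machine of an `(f, f)`-fusion covers every weakest edge
of the fault graph of the primaries. -/
theorem fusion_covers_weakest_edges {T E I J : Type*} [Fintype T] [Nontrivial T]
    [Fintype I] [Fintype J] {δ : T → E → T}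
    (P : I → Machine T E δ) (F : J → Machine T E δ)
    (hP : dmin P = 1)
    (hfus : dmin (Sum.elim P F) > Fintype.card J) :
    ∀ j : J, ∀ t t' : T, t ≠ t' → fdist P t t' = 1 → ¬ (F j).rel t t' := by
  intro j t t' hne hd1 hrel
  have hsum : fdist (Sum.elim P F) t t' = fdist P t t' + fdist F t t' := by
    simp only [fdist]
    convert filter_card_sum (fun i : I ⊕ J => ¬ (Sum.elim P F i).rel t t') using 2 <;>
      congr!
  have hle : dmin (Sum.elim P F) ≤ fdist (Sum.elim P F) t t' :=
    Nat.sInf_le ⟨t, t', hne, rfl⟩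
  have hF : fdist F t t' ≤ Fintype.card J - 1 := by
    have hsub : (Finset.univ.filter fun i => ¬ (F i).rel t t') ⊆ Finset.univ.erase j := by
      intro i hi
      simp only [Finset.mem_filter] at hi
      refine Finset.mem_erase.2 ⟨?_, Finset.mem_univ i⟩
      rintro rfl; exact hi.2 hrel
    calc fdist F t t' ≤ (Finset.univ.erase j).card := Finset.card_le_card hsub
      _ = Fintype.card J - 1 := by rw [Finset.card_erase_of_mem (Finset.mem_univ j)]; rfl
  have hpos : 0 < Fintype.card J := Fintype.card_pos_iff.2 ⟨j⟩
  have : fdist (Sum.elim P F) t t' ≤ Fintype.card J := by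
    rw [hsum, hd1]; omega
  omega
end

section
/- (Detection of Byzantine faults) Let 𝓝 = (M_i)_{i∈ι} be a finite indexed family of machines over T with d_min(𝓝) > f, let r^c ∈ T be the true state, and let r : ι → T be the reported states with at most f liars, i.e., |{i ∈ ι : ¬(r i ≈_{M_i} r^c)}| ≤ f. If a state q ∈ T is consistent with every report, i.e., q ≈_{M_i} (r i) for all i ∈ ι, then q = r^c. Hence, whenever some machine lies about its state, no state other than the true one can be consistent with all reports, so the detectByz algorithm detects up to f Byzantine faults. -/
open scoped Classical

/-- Detection of Byzantine faults: if `d_min(𝓝) > f`, the true state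
is `r^c`, the reports `r` have at most `f` liars, and a state `q` is consistent with
every report, then `q = r^c`. -/
theorem detectByz_correct {T E ι : Type*} [Fintype T] [Nontrivial T] [Fintype ι]
    {δ : T → E → T} (M : ι → Machine T E δ) (f : ℕ) (hmin : dmin M > f)
    (rc : T) (r : ι → T)
    (hliars : (Finset.univ.filter fun i => ¬ (M i).rel (r i) rc).card ≤ f)
    (q : T) (hq : ∀ i : ι, (M i).rel q (r i)) :
    q = rc := by
  by_contra hne
  have hle : dmin M ≤ fdist M q rc := Nat.sInf_le ⟨q, rc, hne, rfl⟩
  have hsub : (Finset.univ.filter fun i => ¬ (M i).rel q rc) ⊆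
      (Finset.univ.filter fun i => ¬ (M i).rel (r i) rc) := by
    intro i hi
    simp only [Finset.mem_filter, Finset.mem_univ, true_and] at hi ⊢
    intro h
    exact hi ((M i).equiv.trans (hq i) h)
  have : fdist M q rc ≤ f := le_trans (Finset.card_le_card hsub) hliars
  omega
end

section
/- (Correction of crash faults) Let 𝓝 = (M_i)_{i∈ι} be a finite indexed family of machines over T with d_min(𝓝) > f, let A ⊆ ι be the set of surviving machines with |ι \ A| ≤ f (at most f machines have crashed), and let r ∈ T be the true state. Then r is the unique state lying in the block of every surviving machine that contains r: for every q ∈ T, if q ≈_{M_i} r for all i ∈ A, then q = r. Hence the correctCrash algorithm corrects up to f crash faults. -/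
open scoped Classical

/-- Correction of crash faults: if `d_min(𝓝) > f` and at most `f`
machines have crashed, the true state `r` is the unique state lying in the block of
every surviving machine that contains `r`. -/
theorem correctCrash_correct {T E ι : Type*} [Fintype T] [Nontrivial T] [Fintype ι]
    {δ : T → E → T} (M : ι → Machine T E δ) (f : ℕ) (hmin : dmin M > f)
    (A : Finset ι) (hA : (Finset.univ \ A).card ≤ f) (r : T) :
    ∀ q : T, (∀ i ∈ A, (M i).rel q r) → q = r := by
  intro q hq
  by_contra hne
  have h1 : dmin M ≤ fdist M q r := Nat.sInf_le ⟨q, r, hne, rfl⟩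
  have h2 : fdist M q r ≤ (Finset.univ \ A).card := by
    apply Finset.card_le_card
    intro i hi
    simp only [Finset.mem_filter, Finset.mem_univ, true_and] at hi
    simp only [Finset.mem_sdiff, Finset.mem_univ, true_and]
    exact fun hiA => hi (hq i hiA)
  omega
end

section
/- (Correction of Byzantine faults by voting) Let 𝓝 = (M_i)_{i∈ι} be a finite indexed family of n + f machines over T (|ι| = n + f) with d_min(𝓝) > f. Let r^c ∈ T be the true state and let r : ι → T be the reported states with at most ⌊f/2⌋ liars, i.e., |{i ∈ ι : ¬(r i ≈_{M_i} r^c)}| ≤ ⌊f/2⌋. For q ∈ T define the vote count V(q) = |{i ∈ ι : q ≈_{M_i} (r i)}|. Then V(r^c) ≥ n + ⌊f/2⌋, and V(q) < n + ⌊f/2⌋ for every q ≠ r^c; hence r^c is the unique state receiving at least n + ⌊f/2⌋ votes, and the correctByz algorithm corrects up to ⌊f/2⌋ Byzantine faults. -/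
open scoped Classical

/-- Correction of Byzantine faults by voting: with `n + f` machines,
`d_min(𝓝) > f` and at most `⌊f/2⌋` liars, the true state `r^c` gets at least
`n + ⌊f/2⌋` votes and every other state gets fewer. -/
theorem correctByz_correct {T E ι : Type*} [Fintype T] [Nontrivial T] [Fintype ι]
    {δ : T → E → T} (M : ι → Machine T E δ) (n f : ℕ)
    (hcard : Fintype.card ι = n + f) (hmin : dmin M > f)
    (rc : T) (r : ι → T)
    (hliars : (Finset.univ.filter fun i => ¬ (M i).rel (r i) rc).card ≤ f / 2) :
    (Finset.univ.filter fun i => (M i).rel rc (r i)).card ≥ n + f / 2 ∧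
      ∀ q : T, q ≠ rc →
        (Finset.univ.filter fun i => (M i).rel q (r i)).card < n + f / 2 := by
  constructor
  · have h1 : (Finset.univ.filter fun i => (M i).rel rc (r i)).card
        + (Finset.univ.filter fun i => ¬ (M i).rel rc (r i)).card = n + f := by
      rw [Finset.card_filter_add_card_filter_not, Finset.card_univ, hcard]
    have heq : (Finset.univ.filter fun i => ¬ (M i).rel rc (r i))
        = (Finset.univ.filter fun i => ¬ (M i).rel (r i) rc) := by
      apply Finset.filter_congr
      intro i _
      exact not_congr ⟨fun h => (M i).equiv.symm h, fun h => (M i).equiv.symm h⟩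
    rw [heq] at h1
    omega
  · intro q hq
    have hfd : f < fdist M q rc := lt_of_lt_of_le hmin (Nat.sInf_le ⟨q, rc, hq, rfl⟩)
    have h2 : (Finset.univ.filter fun i => (M i).rel q rc).card
        + (Finset.univ.filter fun i => ¬ (M i).rel q rc).card = n + f := by
      rw [Finset.card_filter_add_card_filter_not, Finset.card_univ, hcard]
    have hsub : (Finset.univ.filter fun i => (M i).rel q (r i))
        ⊆ (Finset.univ.filter fun i => (M i).rel q rc)
          ∪ (Finset.univ.filter fun i => ¬ (M i).rel (r i) rc) := by
      intro i hi
      simp only [Finset.mem_filter, Finset.mem_union, Finset.mem_univ, true_and] at hi ⊢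
      by_cases h : (M i).rel (r i) rc
      · exact Or.inl ((M i).equiv.trans hi h)
      · exact Or.inr h
    have hle := le_trans (Finset.card_le_card hsub) (Finset.card_union_le _ _)
    have hfe : fdist M q rc = (Finset.univ.filter fun i => ¬ (M i).rel q rc).card := rfl
    omega
end
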